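/- Let n ≥ 2 and let D be the distance matrix of the directed cycle on n vertices, i.e. D_{ij} = (j - i) mod n, taken as a representative in {0,1,...,n-1}. Then det(D) = (-1)^{n-1} n^{n-2} · (n(n-1)/2). -/

import Mathlib

open Matrix Finset

lemma finSubVal' {p : ℕ} (i k : Fin (p+2)) :
    ((k - i : Fin (p+2)) : ℕ) =
      if (i:ℕ) ≤ (k:ℕ) then (k:ℕ) - (i:ℕ) else (k:ℕ) + (p+2) - (i:ℕ) := by
  have hi := i.isLt
  have hk := k.isLt
  rw [Fin.sub_def]
  show (p + 2 - ↑i + ↑k) % (p+2) = _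
  split_ifs with h
  · have e : p + 2 - (i:ℕ) + (k:ℕ) = (p+2) + ((k:ℕ) - (i:ℕ)) := by omega
    rw [e, Nat.add_mod_left, Nat.mod_eq_of_lt (by omega)]
  · rw [Nat.mod_eq_of_lt (by omega)]
    omega

lemma gauss' (m : ℕ) : ∑ v ∈ Finset.range m, ((v:ℝ)+1) = ((m:ℝ)+1)*(m:ℝ)/2 := by
  induction m with
  | zero => simp
  | succ k ih => rw [Finset.sum_range_succ, ih]; push_cast; ring

theorem stmt_6 {n : ℕ} (hn : 2 ≤ n)
    (D : Matrix (Fin n) (Fin n) ℝ)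
    (hD : D = Matrix.of fun i j => (((j - i : Fin n) : ℕ) : ℝ)) :
    D.det = (-1 : ℝ) ^ (n - 1) * (n : ℝ) ^ (n - 2) * ((n : ℝ) * ((n : ℝ) - 1) / 2) := by
  obtain ⟨p, rfl⟩ : ∃ p, n = p + 2 := ⟨n - 2, by omega⟩
  subst hD
  set D : Matrix (Fin (p+2)) (Fin (p+2)) ℝ :=
    Matrix.of (fun i j => (((j - i : Fin (p+2)) : ℕ) : ℝ)) with hD
  set E : Matrix (Fin (p+2)) (Fin (p+2)) ℝ :=
    Matrix.of (fun i j => if i = j then 1 else if (j:ℕ) = (i:ℕ) + 1 then -1 else 0) with hE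
  set F : Matrix (Fin (p+2)) (Fin (p+2)) ℝ :=
    Matrix.of (fun j k => if (k:ℕ) = p + 1 then 1 else if j = k then 1 else 0) with hF
  have hdetE : E.det = 1 := by
    rw [Matrix.det_of_upperTriangular]
    · simp [hE]
    · intro i j hij
      simp only [hE, Matrix.of_apply]
      have h1 : (j:ℕ) < (i:ℕ) := hij
      rw [if_neg (by simp [Fin.ext_iff]; omega), if_neg (by omega)]
  have hdetF : F.det = 1 := by
    rw [Matrix.det_of_upperTriangular]
    · simp [hF]
    · intro i j hij
      simp only [hF, Matrix.of_apply]
      have h1 : (j:ℕ) < (i:ℕ) := hij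
      have h2 : (i:ℕ) < p + 2 := i.isLt
      rw [if_neg (by omega), if_neg (by simp [Fin.ext_iff]; omega)]
  -- entries of E * D
  have hM1 : ∀ i k : Fin (p+2), (i:ℕ) < p + 1 →
      (E * D) i k = if i = k then -((p:ℝ)+1) else 1 := by
    intro i k hi
    set j1 : Fin (p+2) := ⟨(i:ℕ)+1, by omega⟩ with hj1
    have hj1v : (j1:ℕ) = (i:ℕ) + 1 := rfl
    have hEi : ∀ l, E i l = (if i = l then 1 else 0) + (if (l:ℕ) = (i:ℕ)+1 then -1 else 0) := by
      intro l
      simp only [hE, Matrix.of_apply]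
      by_cases h1 : i = l
      · rw [if_pos h1, if_pos h1, if_neg (by subst h1; omega)]
        norm_num
      · rw [if_neg h1, if_neg h1, zero_add]
    rw [Matrix.mul_apply]
    simp only [hEi, add_mul, ite_mul, one_mul, zero_mul, neg_one_mul]
    have hcond : ∀ l : Fin (p+2), ((l:ℕ) = (i:ℕ)+1) = (l = j1) := fun l =>
      propext ⟨fun h => Fin.ext (h.trans hj1v.symm), fun h => by rw [h]⟩
    simp only [hcond]
    rw [Finset.sum_add_distrib, Finset.sum_ite_eq Finset.univ i (fun l => D l k),
      Finset.sum_ite_eq' Finset.univ j1 (fun l => -(D l k))]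
    simp only [Finset.mem_univ, if_true]
    have hDik : D i k = (((k - i : Fin (p+2)) : ℕ) : ℝ) := rfl
    have hDjk : D j1 k = (((k - j1 : Fin (p+2)) : ℕ) : ℝ) := rfl
    have hkv := k.isLt
    by_cases hik : i = k
    · subst hik
      have e1 : ((i - i : Fin (p+2)) : ℕ) = 0 := by rw [finSubVal']; simp
      have e2 : ((i - j1 : Fin (p+2)) : ℕ) = p + 1 := by
        rw [finSubVal', hj1v]; rw [if_neg (by omega)]; omega
      rw [if_pos rfl, hDik, hDjk, e1, e2]
      push_cast
      ring
    · have hv : (i:ℕ) ≠ (k:ℕ) := fun h => hik (Fin.ext h)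
      have e12 : ((k - i : Fin (p+2)) : ℕ) = ((k - j1 : Fin (p+2)) : ℕ) + 1 := by
        rw [finSubVal', finSubVal', hj1v]
        split_ifs <;> omega
      rw [if_neg hik, hDik, hDjk, e12]
      push_cast
      ring
  have hM2 : ∀ k : Fin (p+2), (E * D) ⟨p+1, by omega⟩ k =
      if (k:ℕ) = p + 1 then 0 else ((k:ℕ):ℝ) + 1 := by
    intro k
    set iL : Fin (p+2) := ⟨p+1, by omega⟩ with hiL
    have hiLv : (iL:ℕ) = p + 1 := rfl
    have hEi : ∀ l, E iL l = if iL = l then 1 else 0 := by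
      intro l
      simp only [hE, Matrix.of_apply]
      by_cases h1 : iL = l
      · simp [h1]
      · rw [if_neg h1]
        rw [if_neg (show ¬(l:ℕ) = (iL:ℕ)+1 by have := l.isLt; omega), if_neg h1]
    rw [Matrix.mul_apply]
    simp only [hEi, ite_mul, one_mul, zero_mul]
    rw [Finset.sum_ite_eq Finset.univ iL (fun l => D l k)]
    simp only [Finset.mem_univ, if_true]
    have hDik : D iL k = (((k - iL : Fin (p+2)) : ℕ) : ℝ) := rfl
    have hkv := k.isLt
    by_cases hk : (k:ℕ) = p + 1
    · have e1 : ((k - iL : Fin (p+2)) : ℕ) = 0 := by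
        rw [finSubVal']
        rw [if_pos (by omega)]
        omega
      rw [if_pos hk, hDik, e1]; simp
    · have e1 : ((k - iL : Fin (p+2)) : ℕ) = (k:ℕ) + 1 := by
        rw [finSubVal']
        rw [if_neg (by omega)]
        omega
      rw [if_neg hk, hDik, e1]; push_cast; ring
  -- row sums of E * D
  have hrow1 : ∀ i : Fin (p+2), (i:ℕ) < p + 1 → ∑ k, (E * D) i k = 0 := by
    intro i hi
    have h : ∀ k, (E * D) i k = 1 + (if i = k then -((p:ℝ)+2) else 0) := by
      intro k
      rw [hM1 i k hi]
      split_ifs <;> ring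
    simp only [h]
    rw [Finset.sum_add_distrib, Finset.sum_ite_eq Finset.univ i (fun _ => -((p:ℝ)+2))]
    simp only [Finset.mem_univ, if_true, Finset.sum_const, Finset.card_univ, Fintype.card_fin,
      nsmul_eq_mul]
    push_cast
    ring
  have hrow2 : ∑ k, (E * D) ⟨p+1, by omega⟩ k = ((p:ℝ)+2)*((p:ℝ)+1)/2 := by
    simp only [hM2]
    rw [Fin.sum_univ_eq_sum_range (fun v => if v = p+1 then (0:ℝ) else (v:ℝ)+1) (p+2)]
    rw [Finset.sum_range_succ, if_pos rfl, add_zero]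
    rw [Finset.sum_congr rfl (fun v hv => if_neg (by simp at hv; omega)), gauss' (p+1)]
    push_cast
    ring
  -- entries of N = E * D * F
  have hN1 : ∀ i k : Fin (p+2), (k:ℕ) ≠ p + 1 → (E * D * F) i k = (E * D) i k := by
    intro i k hk
    rw [Matrix.mul_apply]
    have h : ∀ l, F l k = if l = k then 1 else 0 := by
      intro l
      simp only [hF, Matrix.of_apply, if_neg hk]
    simp only [h, mul_ite, mul_one, mul_zero]
    rw [Finset.sum_ite_eq' Finset.univ k (fun l => (E * D) i l)]
    simp
  have hN2 : ∀ i : Fin (p+2), ∀ k : Fin (p+2), (k:ℕ) = p + 1 →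
      (E * D * F) i k = ∑ l, (E * D) i l := by
    intro i k hk
    rw [Matrix.mul_apply]
    have h : ∀ l, F l k = 1 := by
      intro l
      simp only [hF, Matrix.of_apply, if_pos hk]
    simp only [h, mul_one]
  -- block decomposition
  set A : Matrix (Fin (p+1)) (Fin (p+1)) ℝ :=
    Matrix.of (fun i j => if i = j then -((p:ℝ)+1) else 1) with hA
  set C : Matrix (Fin 1) (Fin (p+1)) ℝ :=
    Matrix.of (fun _ j => ((j:ℕ):ℝ) + 1) with hC
  set d : Matrix (Fin 1) (Fin 1) ℝ :=
    Matrix.of (fun _ _ => ((p:ℝ)+2)*((p:ℝ)+1)/2) with hd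
  set e : Fin (p+1) ⊕ Fin 1 ≃ Fin (p+2) := finSumFinEquiv with he
  have hvl : ∀ j : Fin (p+1), ((e (Sum.inl j) : Fin (p+2)) : ℕ) = (j:ℕ) := by
    intro j; simp [he]
  have hvr : ∀ j : Fin 1, ((e (Sum.inr j) : Fin (p+2)) : ℕ) = p + 1 := by
    intro j; have := j.isLt; simp [he]; try omega
  have hsub : (E * D * F).submatrix e e = Matrix.fromBlocks A 0 C d := by
    ext i j
    rcases i with i | i <;> rcases j with j | j <;>
      simp only [Matrix.submatrix_apply, Matrix.fromBlocks_apply₁₁, Matrix.fromBlocks_apply₁₂,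
        Matrix.fromBlocks_apply₂₁, Matrix.fromBlocks_apply₂₂]
    · -- top-left
      rw [hN1 _ _ (by rw [hvl]; omega), hM1 _ _ (by rw [hvl]; omega)]
      simp only [hA, Matrix.of_apply]
      by_cases h : i = j
      · subst h; simp
      · rw [if_neg (fun hh => h (Sum.inl.inj (e.injective hh))), if_neg h]
    · -- top-right : zero
      rw [hN2 _ _ (hvr j), hrow1 _ (by rw [hvl]; omega)]
      simp
    · -- bottom-left
      have hiv : e (Sum.inr i) = (⟨p+1, by omega⟩ : Fin (p+2)) := Fin.ext (hvr i)
      rw [hN1 _ _ (by rw [hvl]; omega), hiv, hM2, if_neg (by rw [hvl]; omega), hvl]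
      simp [hC]
    · -- bottom-right
      have hiv : e (Sum.inr i) = (⟨p+1, by omega⟩ : Fin (p+2)) := Fin.ext (hvr i)
      rw [hN2 _ _ (hvr j), hiv, hrow2]
      simp [hd]
  have hdetN : (E * D * F).det = A.det * (((p:ℝ)+2)*((p:ℝ)+1)/2) := by
    rw [← Matrix.det_submatrix_equiv_self e, hsub, Matrix.det_fromBlocks_zero₁₂,
      Matrix.det_fin_one]
    rfl
  have hp2 : ((p:ℝ)+2) ≠ 0 := by positivity
  have hAfact : A = (-((p:ℝ)+2)) •
      (1 + Matrix.replicateCol (Fin 1) (fun _ : Fin (p+1) => -(1/((p:ℝ)+2))) *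
        Matrix.replicateRow (Fin 1) (fun _ : Fin (p+1) => (1:ℝ))) := by
    ext i j
    simp only [hA, Matrix.of_apply, Matrix.smul_apply, Matrix.add_apply, Matrix.one_apply,
      Matrix.mul_apply, Fin.sum_univ_one, Matrix.replicateCol_apply, Matrix.replicateRow_apply, smul_eq_mul]
    by_cases h : i = j
    · rw [if_pos h, if_pos h]; field_simp; ring
    · rw [if_neg h, if_neg h]; field_simp; ring
  have hdetA : A.det = (-((p:ℝ)+2))^(p+1) * (1/((p:ℝ)+2)) := by
    rw [hAfact, Matrix.det_smul]
    erw [Matrix.det_one_add_replicateCol_mul_replicateRow]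
    rw [Fintype.card_fin]
    congr 1
    simp only [dotProduct, Finset.sum_const, Finset.card_univ, Fintype.card_fin,
      nsmul_eq_mul, one_mul]
    field_simp
    push_cast
    ring
  have hfinal : D.det = A.det * (((p:ℝ)+2)*((p:ℝ)+1)/2) := by
    rw [← hdetN, Matrix.det_mul, Matrix.det_mul, hdetE, hdetF, one_mul, mul_one]
  rw [hfinal, hdetA]
  have h1 : p + 2 - 1 = p + 1 := by omega
  have h2 : p + 2 - 2 = p := by omega
  rw [h1, h2]
  have hneg : (-((p:ℝ)+2))^(p+1) = (-1:ℝ)^(p+1) * ((p:ℝ)+2)^(p+1) := by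
    rw [← neg_one_mul, mul_pow]
  rw [hneg, pow_succ]
  push_cast
  field_simp
  ring
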